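/- arXiv:1511.00367 — 3 statements merged into one kernel-verified Lean document; each statement's English description precedes it below -/
import Mathlib

section
/- If a single edge is inserted into a graph G, then for every node v ∈ V(G), the core number of v increases by at most 1; that is, core(v, G ∪ {(u,w)}) ≤ core(v, G) + 1. -/
variable {V : Type*} [Fintype V]

/-- The k-core of `G`, as the set of vertices contained in some subgraph
(vertex set) in which every vertex has at least `k` neighbors inside the set. -/
def coreSet (G : SimpleGraph V) (k : ℕ) : Set V :=
  {v | ∃ S : Set V, v ∈ S ∧ ∀ u ∈ S, k ≤ (S ∩ G.neighborSet u).ncard}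

/-- The core number of `v`: the largest `k` such that `v` belongs to the `k`-core. -/
noncomputable def coreNumber (G : SimpleGraph V) (v : V) : ℕ :=
  sSup {k | v ∈ coreSet G k}

lemma mem_coreSet_zero (G : SimpleGraph V) (v : V) : v ∈ coreSet G 0 :=
  ⟨{v}, Set.mem_singleton v, fun _ _ => Nat.zero_le _⟩

lemma coreSet_bdd (G : SimpleGraph V) (v : V) : BddAbove {k | v ∈ coreSet G k} := by
  refine ⟨Fintype.card V, fun k hk => ?_⟩
  obtain ⟨S, hvS, hS⟩ := hk
  calc k ≤ (S ∩ G.neighborSet v).ncard := hS v hvS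
    _ ≤ Fintype.card V := by
        have h := Set.ncard_le_ncard (Set.subset_univ (S ∩ G.neighborSet v)) Set.finite_univ
        simpa [Set.ncard_univ, Nat.card_eq_fintype_card] using h

lemma step (G : SimpleGraph V) (u w : V) (huw : u ≠ w) (v : V) (m : ℕ)
    (h : v ∈ coreSet (G ⊔ SimpleGraph.fromEdgeSet {s(u, w)}) (m + 1)) :
    v ∈ coreSet G m := by
  classical
  obtain ⟨S, hvS, hS⟩ := h
  refine ⟨S, hvS, fun x hx => ?_⟩
  have h1 := hS x hx
  set y := if x = u then w else u with hy
  have hsub : S ∩ (G ⊔ SimpleGraph.fromEdgeSet {s(u, w)}).neighborSet x ⊆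
      insert y (S ∩ G.neighborSet x) := by
    rintro z ⟨hzS, hz⟩
    simp only [SimpleGraph.mem_neighborSet, SimpleGraph.sup_adj,
      SimpleGraph.fromEdgeSet_adj, Set.mem_singleton_iff, Sym2.eq_iff] at hz
    rcases hz with hz | ⟨hz, _⟩
    · exact Or.inr ⟨hzS, hz⟩
    · rcases hz with ⟨hxu, hzw⟩ | ⟨hxw, hzu⟩
      · left; simp [hy, hxu, hzw]
      · left; subst hxw; simp [hy, hzu, huw.symm]
  have h2 := Set.ncard_le_ncard hsub ((Set.toFinite _).insert y)
  have h3 := Set.ncard_insert_le y (S ∩ G.neighborSet x)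
  omega

theorem stmt3 (G : SimpleGraph V) (u w : V) (huw : u ≠ w) (hnadj : ¬ G.Adj u w) :
    ∀ v : V, coreNumber (G ⊔ SimpleGraph.fromEdgeSet {s(u, w)}) v ≤ coreNumber G v + 1 := by
  intro v
  unfold coreNumber
  apply csSup_le
  · exact ⟨0, mem_coreSet_zero _ v⟩
  intro k hk
  match k with
  | 0 => exact Nat.zero_le _
  | m + 1 =>
    have hm : m ∈ {k | v ∈ coreSet G k} := step G u w huw v m hk
    have := le_csSup (coreSet_bdd G v) hm
    omega
end

section
/- If c̄ : V → ℕ satisfies c̄(v) = max{k : at least k neighbors u of v have c̄(u) ≥ k} for every v, and c̄(v) ≤ deg(v, G) for all v, then c̄(v) ≤ core(v) for all v; that is, the core number assignment is the greatest fixed point of the local update. -/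
variable {V : Type*} [Fintype V]

/-- The local update operator: the largest `k` such that at least `k` neighbors `u`
of `v` satisfy `k ≤ c u`. -/
noncomputable def localUpdate (G : SimpleGraph V) (c : V → ℕ) (v : V) : ℕ :=
  sSup {k | k ≤ {u ∈ G.neighborSet v | k ≤ c u}.ncard}

theorem stmt12 (G : SimpleGraph V) (c : V → ℕ)
    (hfix : ∀ v, c v = localUpdate G c v)
    (hdeg : ∀ v, c v ≤ (G.neighborSet v).ncard) :
    ∀ v : V, c v ≤ coreNumber G v := by
  -- Key: the fixed-point value is attained, so `c u ≤ #{w ∈ nbr u | c u ≤ c w}`.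
  have hmem : ∀ u, c u ≤ ({w ∈ G.neighborSet u | c u ≤ c w}).ncard := by
    intro u
    have hbdd : BddAbove {j | j ≤ ({w ∈ G.neighborSet u | j ≤ c w}).ncard} := by
      refine ⟨Fintype.card V, fun j hj => ?_⟩
      calc j ≤ ({w ∈ G.neighborSet u | j ≤ c w}).ncard := hj
        _ ≤ (Set.univ : Set V).ncard :=
            Set.ncard_le_ncard (Set.subset_univ _) (Set.toFinite _)
        _ = Fintype.card V := by simp [Set.ncard_univ]
    have hne : ({j | j ≤ ({w ∈ G.neighborSet u | j ≤ c w}).ncard} : Set ℕ).Nonempty :=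
      ⟨0, Nat.zero_le _⟩
    have h := Nat.sSup_mem hne hbdd
    have h2 : c u ∈ {j | j ≤ ({w ∈ G.neighborSet u | j ≤ c w}).ncard} := by
      rw [hfix u]; exact h
    exact h2
  intro v
  set S : Set V := {w | c v ≤ c w} with hS
  have hcore : v ∈ coreSet G (c v) := by
    refine ⟨S, by simp [hS], fun u hu => ?_⟩
    have hsub : {w ∈ G.neighborSet u | c u ≤ c w} ⊆ S ∩ G.neighborSet u := by
      intro w hw
      exact ⟨le_trans hu hw.2, hw.1⟩
    calc c v ≤ c u := hu
      _ ≤ ({w ∈ G.neighborSet u | c u ≤ c w}).ncard := hmem u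
      _ ≤ (S ∩ G.neighborSet u).ncard :=
          Set.ncard_le_ncard hsub (Set.toFinite _)
  refine le_csSup ?_ hcore
  refine ⟨Fintype.card V, fun j hj => ?_⟩
  obtain ⟨T, hvT, hT⟩ := hj
  calc j ≤ (T ∩ G.neighborSet v).ncard := hT v hvT
    _ ≤ (Set.univ : Set V).ncard :=
        Set.ncard_le_ncard (Set.subset_univ _) (Set.toFinite _)
    _ = Fintype.card V := by simp [Set.ncard_univ]
end

section
/- For every node w ∈ V_c* (the set of nodes whose core number increases after an edge insertion), the new count cnt(w, G') = |{x ∈ nbr(w, G') : core(x, G') ≥ core(w, G')}| equals cnt*(w) = |{x ∈ nbr(w, G') : core(x, G) > c_old or x ∈ V_c*}|. -/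
variable {V : Type*} [Fintype V]

/-- `cnt(w, H)` : number of neighbors of `w` in `H` whose core number is at least that of `w`. -/
noncomputable def cnt (G : SimpleGraph V) (w : V) : ℕ :=
  {x ∈ G.neighborSet w | coreNumber G w ≤ coreNumber G x}.ncard

/-!
Adding the edge `uv` raises a core number by at most one, since every vertex gains at most one
neighbour. Write `c` for the old core number of `u`. For a neighbour `x` of `w` the condition
`c + 1 ≤ core(x, G')` therefore holds either because already `c < core(x, G)`, or because
`core(x, G) = c` and the core number of `x` rose to `c + 1`. In the second case `x` is reachable
from `u` through vertices of old core number `c`: otherwise the vertices of the new `(c + 1)`-core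
lying in the component `T` of `x` among old core-`c` vertices, together with the old
`(c + 1)`-core, would already form a `(c + 1)`-core of `G`: as `u` lies in neither part, the new
edge gives no vertex of `T` a neighbour inside this set.
-/

open SimpleGraph

section coreNumber

variable {α : Type*} {G H : SimpleGraph α}

lemma subset_coreSet {S : Set α} {k : ℕ}
    (hS : ∀ w ∈ S, k ≤ (S ∩ G.neighborSet w).ncard) : S ⊆ coreSet G k :=
  fun _ hx => ⟨S, hx, hS⟩

lemma le_ncard_coreSet_inter_neighborSet [Finite α] {k : ℕ} {w : α} (hw : w ∈ coreSet G k) :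
    k ≤ (coreSet G k ∩ G.neighborSet w).ncard := by
  obtain ⟨S, hwS, hS⟩ := hw
  exact (hS w hwS).trans (Set.ncard_le_ncard (Set.inter_subset_inter_left _ (subset_coreSet hS)))

lemma coreSet_anti : Antitone (coreSet G) :=
  fun _ _ hk _ ⟨S, hx, hS⟩ => ⟨S, hx, fun w hw => hk.trans (hS w hw)⟩

lemma bddAbove_setOf_mem_coreSet [Finite α] (x : α) : BddAbove {k | x ∈ coreSet G k} := by
  refine ⟨Nat.card α, fun k hk => ?_⟩
  obtain ⟨S, hx, hS⟩ := hk
  exact (hS x hx).trans (Set.ncard_le_card _)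

lemma mem_coreSet_iff [Finite α] {x : α} {k : ℕ} :
    x ∈ coreSet G k ↔ k ≤ coreNumber G x := by
  refine ⟨fun hx => le_csSup (bddAbove_setOf_mem_coreSet x) hx, fun hk => coreSet_anti hk ?_⟩
  have h0 : x ∈ coreSet G 0 := ⟨{x}, rfl, fun _ _ => Nat.zero_le _⟩
  exact Nat.sSup_mem ⟨0, h0⟩ (bddAbove_setOf_mem_coreSet x)

lemma coreNumber_mono [Finite α] (h : G ≤ H) (x : α) : coreNumber G x ≤ coreNumber H x := by
  obtain ⟨S, hx, hS⟩ := mem_coreSet_iff.2 (le_refl (coreNumber G x))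
  refine mem_coreSet_iff.1 ⟨S, hx, fun w hw => (hS w hw).trans ?_⟩
  exact Set.ncard_le_ncard (Set.inter_subset_inter_right _ fun _ hy => h hy)

lemma subset_coreSet_of_neighborSet_subset [Finite α] {k : ℕ} {E : Set α}
    (hE : E ⊆ coreSet H k)
    (h : ∀ w ∈ E, coreSet H k ∩ H.neighborSet w ⊆ (coreSet G k ∪ E) ∩ G.neighborSet w) :
    E ⊆ coreSet G k := by
  refine (Set.subset_union_right (s := coreSet G k)).trans (subset_coreSet fun w hw => ?_)
  rcases hw with hw | hw
  · exact (le_ncard_coreSet_inter_neighborSet hw).trans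
      (Set.ncard_le_ncard (Set.inter_subset_inter_left _ Set.subset_union_left))
  · exact (le_ncard_coreSet_inter_neighborSet (hE hw)).trans (Set.ncard_le_ncard (h w hw))

end coreNumber

section sup_edge

variable {α : Type*} {G : SimpleGraph α} {u v : α}

def sameCoreAdj (G H : SimpleGraph α) (c : ℕ) (a b : α) : Prop :=
  H.Adj a b ∧ coreNumber G a = c ∧ coreNumber G b = c

lemma eq_of_adj_sup_edge_of_not_adj {a b : α} (h : (G ⊔ edge u v).Adj a b) (hG : ¬ G.Adj a b) :
    a = u ∧ b = v ∨ a = v ∧ b = u := by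
  simpa [edge_adj, hG] using ((sup_adj _ _ _ _).1 h).resolve_left hG |>.1

lemma ncard_inter_neighborSet_sup_edge_le [Finite α] (C : Set α) (w : α) :
    (C ∩ (G ⊔ edge u v).neighborSet w).ncard ≤ (C ∩ G.neighborSet w).ncard + 1 := by
  have hedge : ((edge u v).neighborSet w).ncard ≤ 1 :=
    (Set.ncard_le_one).2 fun a ha b hb => by simp only [mem_neighborSet, edge_adj] at ha hb; grind
  calc (C ∩ (G ⊔ edge u v).neighborSet w).ncard
      ≤ (C ∩ G.neighborSet w ∪ (edge u v).neighborSet w).ncard := by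
        refine Set.ncard_le_ncard ?_
        rw [neighborSet_sup, Set.inter_union_distrib_left]
        exact Set.union_subset_union_right _ Set.inter_subset_right
    _ ≤ (C ∩ G.neighborSet w).ncard + 1 := (Set.ncard_union_le _ _).trans (by omega)

lemma coreNumber_sup_edge_le_succ [Finite α] (x : α) :
    coreNumber (G ⊔ edge u v) x ≤ coreNumber G x + 1 := by
  set K := coreNumber (G ⊔ edge u v) x
  have hsub : coreSet (G ⊔ edge u v) K ⊆ coreSet G (K - 1) := subset_coreSet fun w hw => by
    have := le_ncard_coreSet_inter_neighborSet hw
    have := ncard_inter_neighborSet_sup_edge_le (G := G) (u := u) (v := v)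
      (coreSet (G ⊔ edge u v) K) w
    omega
  have := mem_coreSet_iff.1 (hsub (mem_coreSet_iff.2 le_rfl))
  omega

lemma reflTransGen_of_coreNumber_lt_coreNumber_sup_edge [Finite α] {x : α}
    (hx : coreNumber G x = coreNumber G u) (hlt : coreNumber G x < coreNumber (G ⊔ edge u v) x) :
    Relation.ReflTransGen (sameCoreAdj G (G ⊔ edge u v) (coreNumber G u)) u x := by
  set c := coreNumber G u
  set T := {y | Relation.ReflTransGen (sameCoreAdj G (G ⊔ edge u v) c) y x}
  have hT : ∀ y ∈ T, coreNumber G y = c := fun y hy => by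
    induction hy using Relation.ReflTransGen.head_induction_on with
    | refl => exact hx
    | head hab _ _ => exact hab.2.1
  by_contra huT
  suffices T ∩ coreSet (G ⊔ edge u v) (c + 1) ⊆ coreSet G (c + 1) by
    have := mem_coreSet_iff.1 (this ⟨Relation.ReflTransGen.refl, mem_coreSet_iff.2 (by omega)⟩)
    omega
  refine subset_coreSet_of_neighborSet_subset Set.inter_subset_right
    fun w ⟨hwT, _⟩ y ⟨hy, hwy⟩ => ?_
  have hyc : c ≤ coreNumber G y := by
    have := mem_coreSet_iff.1 hy
    have := coreNumber_sup_edge_le_succ (G := G) (u := u) (v := v) y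
    omega
  have hy' : y ∈ coreSet G (c + 1) ∨ y ∈ T := by
    rcases hyc.lt_or_eq with hyc | hyc
    · exact .inl (mem_coreSet_iff.2 hyc)
    · exact .inr (.head ⟨hwy.symm, hyc.symm, hT w hwT⟩ hwT)
  refine ⟨hy'.imp_right fun hyT => ⟨hyT, hy⟩, by_contra fun hG => ?_⟩
  rcases eq_of_adj_sup_edge_of_not_adj hwy hG with ⟨rfl, -⟩ | ⟨-, rfl⟩
  · exact huT hwT
  · exact hy'.elim (fun h => (mem_coreSet_iff.1 h).not_gt (Nat.lt_succ_self c)) huT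

lemma succ_le_coreNumber_sup_edge_iff [Finite α] {x : α} :
    coreNumber G u + 1 ≤ coreNumber (G ⊔ edge u v) x ↔ coreNumber G u < coreNumber G x ∨
      Relation.ReflTransGen (sameCoreAdj G (G ⊔ edge u v) (coreNumber G u)) u x ∧
        coreNumber (G ⊔ edge u v) x = coreNumber G u + 1 := by
  have hsucc := coreNumber_sup_edge_le_succ (G := G) (u := u) (v := v) x
  have hmono := coreNumber_mono (le_sup_left : G ≤ G ⊔ edge u v) x
  constructor
  · refine fun h => or_iff_not_imp_left.2 fun hx => ⟨?_, by omega⟩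
    exact reflTransGen_of_coreNumber_lt_coreNumber_sup_edge (by omega) (by omega)
  · rintro (h | ⟨-, h⟩) <;> omega

end sup_edge

theorem stmt18_general (G : SimpleGraph V) (u v : V)
    (G' : SimpleGraph V) (hG' : G' = G ⊔ SimpleGraph.fromEdgeSet {s(u, v)})
    (Vc : Set V)
    (hVc : Vc = {w | Relation.ReflTransGen
      (fun a b => G'.Adj a b ∧ coreNumber G a = coreNumber G u ∧ coreNumber G b = coreNumber G u)
      u w})
    (Vcs : Set V) (hVcs : Vcs = {w ∈ Vc | coreNumber G' w = coreNumber G u + 1}) :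
    ∀ w ∈ Vcs, cnt G' w =
      {x ∈ G'.neighborSet w | coreNumber G u < coreNumber G x ∨ x ∈ Vcs}.ncard := by
  subst hG' hVcs hVc
  rintro w ⟨-, hw⟩
  rw [cnt, hw]
  congr 1
  ext x
  exact and_congr_right fun _ => succ_le_coreNumber_sup_edge_iff

theorem stmt18 (G : SimpleGraph V) (u v : V) (huv : u ≠ v) (hnadj : ¬ G.Adj u v)
    (hle : coreNumber G u ≤ coreNumber G v)
    (G' : SimpleGraph V) (hG' : G' = G ⊔ SimpleGraph.fromEdgeSet {s(u, v)})
    (Vc : Set V)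
    (hVc : Vc = {w | Relation.ReflTransGen
      (fun a b => G'.Adj a b ∧ coreNumber G a = coreNumber G u ∧ coreNumber G b = coreNumber G u)
      u w})
    (Vcs : Set V) (hVcs : Vcs = {w ∈ Vc | coreNumber G' w = coreNumber G u + 1}) :
    ∀ w ∈ Vcs, cnt G' w =
      {x ∈ G'.neighborSet w | coreNumber G u < coreNumber G x ∨ x ∈ Vcs}.ncard :=
  stmt18_general G u v G' hG' Vc hVc Vcs hVcs
end
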